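/- Running intersection forces descent data: let V₀ be a finite set of variables with finite state spaces, R a commutative semiring, T a finite tree with vertex set I, and clusters U_i ⊆ V₀ for i ∈ I satisfying the running intersection property (for all i, j ∈ I, the intersection U_i ∩ U_j is contained in U_t for every vertex t on the unique path from i to j in T). Suppose the cluster beliefs B_i : Ω(U_i) → R satisfy edgewise separator consistency: for every tree edge {s, t}, ρ_{U_s → U_s∩U_t}(B_s) = ρ_{U_t → U_s∩U_t}(B_t). Then the family (B_i)_{i∈I} is pairwise compatible on all overlaps: for ALL pairs i, j ∈ I, ρ_{U_i → U_i∩U_j}(B_i) = ρ_{U_j → U_i∩U_j}(B_j). -/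

import Mathlib

/-! Marginalization is transitive, so two beliefs that agree on their separator also agree
after marginalizing further to any subset `W` of it. By the running intersection property,
`U i ∩ U j` lies in every cluster on the tree path from `i` to `j`, so the edgewise equalities,
all marginalized down to `U i ∩ U j`, chain along that path. -/

/-- Configurations on a subset `S` of the variable set: an element of `∏_{v ∈ S} Ω v`. -/
abbrev Config {V₀ : Type} (Ω : V₀ → Type) (S : Finset V₀) : Type :=
  ∀ v : {v // v ∈ S}, Ω v.1

/-- Glue a configuration on `W` with a configuration on `U \ W` to a configuration on `U`. -/
def glue {V₀ : Type} [DecidableEq V₀] {Ω : V₀ → Type} {W U : Finset V₀}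
    (y : Config Ω W) (z : Config Ω (U \ W)) : Config Ω U :=
  fun v => if hv : v.1 ∈ W then y ⟨v.1, hv⟩ else z ⟨v.1, Finset.mem_sdiff.mpr ⟨v.2, hv⟩⟩

/-- Marginalization (restriction) map `ρ_{U→W}` for `W ⊆ U`:
`(ρ_{U→W} F)(y) = ∑_{z ∈ Ω(U∖W)} F(y, z)`. -/
def marg {V₀ : Type} [DecidableEq V₀] {Ω : V₀ → Type} [∀ v, Fintype (Ω v)]
    {R : Type} [AddCommMonoid R] {W U : Finset V₀} (_hWU : W ⊆ U)
    (F : Config Ω U → R) : Config Ω W → R :=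
  fun y => ∑ z : Config Ω (U \ W), F (glue y z)

section Marginalization

variable {V₀ : Type} [DecidableEq V₀] {Ω : V₀ → Type}

def sdiffSplitEquiv {W X U : Finset V₀} (hWX : W ⊆ X) (hXU : X ⊆ U) :
    Config Ω (U \ W) ≃ Config Ω (X \ W) × Config Ω (U \ X) where
  toFun u :=
    (fun v => u ⟨v.1, Finset.sdiff_subset_sdiff hXU le_rfl v.2⟩,
     fun v => u ⟨v.1, Finset.sdiff_subset_sdiff le_rfl hWX v.2⟩)
  invFun zw v :=
    if hv : v.1 ∈ X then
      zw.1 ⟨v.1, Finset.mem_sdiff.mpr ⟨hv, (Finset.mem_sdiff.mp v.2).2⟩⟩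
    else
      zw.2 ⟨v.1, Finset.mem_sdiff.mpr ⟨(Finset.mem_sdiff.mp v.2).1, hv⟩⟩
  left_inv u := by
    funext v
    by_cases hv : v.1 ∈ X <;> simp [hv]
  right_inv zw := by
    ext v
    · simp [(Finset.mem_sdiff.mp v.2).1]
    · simp [(Finset.mem_sdiff.mp v.2).2]

variable [∀ v, Fintype (Ω v)] {R : Type} [AddCommMonoid R]

theorem marg_marg {W X U : Finset V₀} (hWX : W ⊆ X) (hXU : X ⊆ U) (F : Config Ω U → R) :
    marg hWX (marg hXU F) = marg (hWX.trans hXU) F := by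
  funext y
  unfold marg
  rw [← Equiv.sum_comp (sdiffSplitEquiv hWX hXU).symm, Fintype.sum_prod_type]
  refine Finset.sum_congr rfl fun z _ => Finset.sum_congr rfl fun w _ => congrArg F ?_
  funext v
  by_cases hvX : v.1 ∈ X
  · by_cases hvW : v.1 ∈ W <;> simp [glue, sdiffSplitEquiv, hvX, hvW]
  · have hvW : v.1 ∉ W := fun h => hvX (hWX h)
    simp [glue, sdiffSplitEquiv, hvX, hvW]

def Compatible {U U' : Finset V₀} (F : Config Ω U → R) (G : Config Ω U' → R) : Prop :=
  marg Finset.inter_subset_left F = marg Finset.inter_subset_right G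

theorem Compatible.marg_eq {U U' W : Finset V₀} {F : Config Ω U → R} {G : Config Ω U' → R}
    (h : Compatible F G) (hWU : W ⊆ U) (hWU' : W ⊆ U') : marg hWU F = marg hWU' G := by
  have hW : W ⊆ U ∩ U' := Finset.subset_inter hWU hWU'
  rw [← marg_marg hW Finset.inter_subset_left, ← marg_marg hW Finset.inter_subset_right]
  exact congrArg (marg hW) h

end Marginalization

theorem marg_eq_marg_of_walk {V₀ : Type} [DecidableEq V₀] {Ω : V₀ → Type}
    [∀ v, Fintype (Ω v)] {R : Type} [AddCommMonoid R] {I : Type} {T : SimpleGraph I}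
    {U : I → Finset V₀} {B : ∀ i, Config Ω (U i) → R}
    (hsep : ∀ i j, T.Adj i j → Compatible (B i) (B j))
    {i j : I} (p : T.Walk i j) {W : Finset V₀} (hW : ∀ t ∈ p.support, W ⊆ U t) :
    marg (hW i p.start_mem_support) (B i) = marg (hW j p.end_mem_support) (B j) := by
  induction p with
  | nil => rfl
  | @cons a b c hadj q ih =>
    have hWq : ∀ t ∈ q.support, W ⊆ U t := fun t ht =>
      hW t (List.mem_cons_of_mem a ht)
    exact ((hsep a b hadj).marg_eq _ (hWq b q.start_mem_support)).trans (ih hWq)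

theorem running_intersection_forces_descent_general {V₀ : Type} [DecidableEq V₀]
    {Ω : V₀ → Type} [∀ v, Fintype (Ω v)] {R : Type} [CommSemiring R]
    {I : Type} (T : SimpleGraph I)
    (hconn : T.Connected)
    (U : I → Finset V₀)
    (hRIP : ∀ (i j : I) (p : T.Walk i j), p.IsPath → ∀ t ∈ p.support, U i ∩ U j ⊆ U t)
    (B : ∀ i, Config Ω (U i) → R)
    (hsep : ∀ i j, T.Adj i j →
      marg (Finset.inter_subset_left : U i ∩ U j ⊆ U i) (B i)
        = marg (Finset.inter_subset_right : U i ∩ U j ⊆ U j) (B j)) :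
    ∀ i j,
      marg (Finset.inter_subset_left : U i ∩ U j ⊆ U i) (B i)
        = marg (Finset.inter_subset_right : U i ∩ U j ⊆ U j) (B j) := by
  classical
  intro i j
  let p : T.Path i j := (hconn.preconnected i j).some.toPath
  exact marg_eq_marg_of_walk hsep p.1 (hRIP i j p.1 p.2)

/-- Running intersection forces descent data: on a junction tree (finite tree of clusters
satisfying the running intersection property), edgewise separator consistency of cluster
beliefs implies pairwise compatibility on ALL overlaps. -/
theorem running_intersection_forces_descent {V₀ : Type} [DecidableEq V₀] [Fintype V₀]
    {Ω : V₀ → Type} [∀ v, Fintype (Ω v)] {R : Type} [CommSemiring R]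
    {I : Type} [Fintype I] (T : SimpleGraph I)
    (hconn : T.Connected) (hacyc : T.IsAcyclic)
    (U : I → Finset V₀)
    (hRIP : ∀ (i j : I) (p : T.Walk i j), p.IsPath → ∀ t ∈ p.support, U i ∩ U j ⊆ U t)
    (B : ∀ i, Config Ω (U i) → R)
    (hsep : ∀ i j, T.Adj i j →
      marg (Finset.inter_subset_left : U i ∩ U j ⊆ U i) (B i)
        = marg (Finset.inter_subset_right : U i ∩ U j ⊆ U j) (B j)) :
    ∀ i j,
      marg (Finset.inter_subset_left : U i ∩ U j ⊆ U i) (B i)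
        = marg (Finset.inter_subset_right : U i ∩ U j ⊆ U j) (B j) :=
  running_intersection_forces_descent_general T hconn U hRIP B hsep
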